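/- arXiv:1809.05186 — 6 statements merged into one kernel-verified Lean document; each statement's English description precedes it below -/
import Mathlib

section
/- If a Tychonoff space X has a minimal point-separating set F of continuous real-valued functions with |F| = τ, then (X × X) \ Δ_X contains a subset D of cardinality τ that is closed and discrete in the subspace (X × X) \ Δ_X. -/
/-!
Minimality of `F` means that for each `f ∈ F` the family `F \ {f}` fails to separate some pair
`(x_f, y_f)`, which is therefore separated by `f` alone. The open sets `{(x, y) | f x ≠ f y}`,
`f ∈ F`, cover the complement of the diagonal and each contains only the pair belonging to its
own `f`. Since `X` is Hausdorff (`F` separates points), such a family of pairs is closed and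
discrete, and it has cardinality `|F|`.
-/

def SepFun {X : Type*} [TopologicalSpace X] (F : Set C(X, ℝ)) : Prop :=
  ∀ x y : X, x ≠ y → ∃ f ∈ F, f x ≠ f y

def MinSepFun {X : Type*} [TopologicalSpace X] (F : Set C(X, ℝ)) : Prop :=
  SepFun F ∧ ∀ G ⊂ F, ¬ SepFun G

open Filter Topology

theorem isClosed_and_discreteTopology_of_finite_inter {Y : Type*} [TopologicalSpace Y]
    [T1Space Y] {D : Set Y} (hD : ∀ y, ∃ U ∈ 𝓝 y, (U ∩ D).Finite) :
    IsClosed D ∧ DiscreteTopology D := by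
  rw [← isDiscrete_iff_discreteTopology, isClosed_and_discrete_iff]
  intro y
  obtain ⟨U, hU, hUD⟩ := hD y
  have hV : U \ ((U ∩ D) \ {y}) ∈ 𝓝 y :=
    sdiff_mem hU (hUD.sdiff.isClosed.compl_mem_nhds fun h => h.2 rfl)
  rw [disjoint_principal_right]
  filter_upwards [nhdsWithin_le_nhds hV, self_mem_nhdsWithin] with p hpV hpy hpD
  exact hpV.2 ⟨⟨hpV.1, hpD⟩, hpy⟩

namespace SepFun

variable {X : Type*} [TopologicalSpace X] {F : Set C(X, ℝ)}

theorem t2Space (hF : SepFun F) : T2Space X :=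
  T2Space.of_injective_continuous (f := fun x (f : F) => (f : C(X, ℝ)) x)
    (fun x y hxy => by
      by_contra hne
      obtain ⟨f, hf, hfxy⟩ := hF x y hne
      exact hfxy (congrFun hxy ⟨f, hf⟩))
    (continuous_pi fun f => f.1.continuous)

end SepFun

namespace MinSepFun

variable {X : Type*} [TopologicalSpace X] {F : Set C(X, ℝ)}

theorem exists_pair_separated_only_by (hF : MinSepFun F) {f : C(X, ℝ)} (hf : f ∈ F) :
    ∃ x y : X, x ≠ y ∧ f x ≠ f y ∧ ∀ g ∈ F, g ≠ f → g x = g y := by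
  obtain ⟨hsep, hmin⟩ := hF
  have hns : ¬ SepFun (F \ {f}) := hmin _ (Set.sdiff_singleton_ssubset.2 hf)
  simp only [SepFun, not_forall, not_exists, not_and, not_not] at hns
  obtain ⟨x, y, hxy, hothers⟩ := hns
  have hothers : ∀ g ∈ F, g ≠ f → g x = g y := fun g hg hgf => hothers g ⟨hg, hgf⟩
  obtain ⟨g, hg, hgxy⟩ := hsep x y hxy
  have hgf : g = f := by_contra fun hgf => hgxy (hothers g hg hgf)
  exact ⟨x, y, hxy, hgf ▸ hgxy, hothers⟩

end MinSepFun

theorem stmt1_general {X : Type*} [TopologicalSpace X]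
    (F : Set C(X, ℝ)) (hF : MinSepFun F) (τ : Cardinal) (hτ : Cardinal.mk F = τ) :
    ∃ D : Set {p : X × X // p.1 ≠ p.2}, Cardinal.mk D = τ ∧
      IsClosed D ∧ DiscreteTopology D := by
  have := hF.1.t2Space
  choose x y hxy hf_sep hothers using fun f : F => hF.exists_pair_separated_only_by f.2
  let φ : F → {p : X × X // p.1 ≠ p.2} := fun f => ⟨(x f, y f), hxy f⟩
  have hφ_eq : ∀ f g : F, g.1 (φ f).1.1 ≠ g.1 (φ f).1.2 → f = g := fun f g hg =>
    by_contra fun hfg => hg (hothers f g g.2 fun h => hfg (Subtype.ext h.symm))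
  have hφ_inj : Function.Injective φ := fun f g hfg => hφ_eq f g (hfg ▸ hf_sep g)
  refine ⟨Set.range φ, by rw [Cardinal.mk_range_eq φ hφ_inj, hτ],
    isClosed_and_discreteTopology_of_finite_inter fun p => ?_⟩
  obtain ⟨f, hf, hfp⟩ := hF.1 p.1.1 p.1.2 p.2
  refine ⟨{q | f q.1.1 ≠ f q.1.2}, (isOpen_ne_fun (by fun_prop) (by fun_prop)).mem_nhds hfp,
    (Set.finite_singleton (φ ⟨f, hf⟩)).subset ?_⟩
  rintro _ ⟨hq, g, rfl⟩
  rw [hφ_eq g ⟨f, hf⟩ hq, Set.mem_singleton_iff]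

/-- If `X` has a minimal point-separating set `F ⊆ C(X,ℝ)` with `|F| = τ`, then the
complement of the diagonal in `X × X` contains a `τ`-sized subset that is closed and
discrete in the subspace `(X × X) \ Δ_X`. -/
theorem stmt1 {X : Type*} [TopologicalSpace X] [T35Space X]
    (F : Set C(X, ℝ)) (hF : MinSepFun F) (τ : Cardinal) (hτ : Cardinal.mk F = τ) :
    ∃ D : Set {p : X × X // p.1 ≠ p.2}, Cardinal.mk D = τ ∧
      IsClosed D ∧ DiscreteTopology D :=
  stmt1_general F hF τ hτ
end

section
/- The Čech–Stone compactification βω of the countable discrete space ω has no minimal point-separating set of continuous real-valued functions. -/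
open Filter Set Topology Function

namespace Ultrafilter

variable {α ι : Type*}

theorem tendsto_nhds_iff {l : Filter ι} {u : ι → Ultrafilter α} {z : Ultrafilter α} :
    Tendsto u l (𝓝 z) ↔ ∀ s ∈ z, ∀ᶠ i in l, s ∈ u i := by
  rw [ultrafilterBasis_is_basis.nhds_hasBasis.tendsto_right_iff]
  constructor
  · intro h s hs
    exact h _ ⟨⟨s, rfl⟩, hs⟩
  · rintro h _ ⟨⟨s, rfl⟩, hs⟩
    exact h s hs

theorem exists_injective_pairwise_disjoint_mem {𝓕 : ι → Filter α} [∀ i, (𝓕 i).NeBot]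
    {l : Filter ι} {z : Ultrafilter α} (hconv : ∀ s ∈ z, ∀ᶠ i in l, s ∈ 𝓕 i)
    (hne : ∃ᶠ i in l, ¬ ↑z ≤ 𝓕 i) :
    ∃ (φ : ℕ → ι) (B : ℕ → Set α), Injective φ ∧ Pairwise (Disjoint on B) ∧
      ∀ k, B k ∈ 𝓕 (φ k) := by
  classical
  -- Keeping every chosen set out of `z` keeps their finite unions out of `z`, so the complement
  -- of such a union is eventually in `𝓕 i` and leaves room for the next set.
  obtain ⟨f, hf, hdisj⟩ := exists_seq_of_forall_finset_exists
    (fun p : ι × Set α => p.2 ∈ 𝓕 p.1 ∧ p.2 ∉ z) (fun p q => Disjoint p.2 q.2) <| by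
      intro s hs
      set U := ⋃ p ∈ s, p.2
      have hU : Uᶜ ∈ z := compl_mem_iff_notMem.2 fun h => by
        obtain ⟨p, hp, hpz⟩ := (finite_biUnion_mem_iff s.finite_toSet).1 h
        exact (hs p hp).2 hpz
      obtain ⟨i, hi, hiU⟩ := (hne.and_eventually (hconv _ hU)).exists
      obtain ⟨S, hS, hSz⟩ : ∃ S ∈ 𝓕 i, S ∉ z := by
        simpa [Filter.le_def] using hi
      refine ⟨(i, S ∩ Uᶜ), ⟨inter_mem hS hiU, fun h => hSz (mem_of_superset h inter_subset_left)⟩,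
        fun p hp => ?_⟩
      exact disjoint_left.2 fun a ha ha' => ha'.2 (mem_biUnion hp ha)
  have hpair : Pairwise (Disjoint on fun k => (f k).2) := by
    intro m n hmn
    rcases hmn.lt_or_gt with h | h
    · exact hdisj m n h
    · exact (hdisj n m h).symm
  refine ⟨fun k => (f k).1, fun k => (f k).2, fun m n hmn => ?_, hpair, fun k => (hf k).1⟩
  by_contra hne'
  have hm : (f m).2 ∈ 𝓕 (f m).1 := (hf m).1
  have hn : (f n).2 ∈ 𝓕 (f m).1 := by simpa only [hmn] using (hf n).1
  exact (inferInstance : (𝓕 _).NeBot).not_disjoint hm hn (hpair hne')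

theorem exists_mem_infinite_disjoint (z : Ultrafilter α) {B : ℕ → Set α}
    (hB : Pairwise (Disjoint on B)) : ∃ t ∈ z, {k | Disjoint t (B k)}.Infinite := by
  set A := ⋃ k, B (2 * k)
  have hodd : ∀ k, Disjoint A (B (2 * k + 1)) := fun k =>
    disjoint_iUnion_left.2 fun j => hB (by omega)
  have heven : ∀ k, Disjoint Aᶜ (B (2 * k)) := fun k =>
    disjoint_compl_left_iff_subset.2 (subset_iUnion (fun j => B (2 * j)) k)
  by_cases hA : A ∈ z
  · refine ⟨A, hA, infinite_of_injective_forall_mem (f := fun k => 2 * k + 1) ?_ hodd⟩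
    intro m n h
    simp only at h
    omega
  · refine ⟨Aᶜ, compl_mem_iff_notMem.2 hA,
      infinite_of_injective_forall_mem (f := fun k => 2 * k) ?_ heven⟩
    intro m n h
    simp only at h
    omega

theorem eventually_cofinite_eq_of_tendsto {u : ι → Ultrafilter α} {z : Ultrafilter α}
    (h : Tendsto u cofinite (𝓝 z)) : ∀ᶠ i in cofinite, u i = z := by
  by_contra hne
  have hconv : ∀ s ∈ z, ∀ᶠ i in cofinite, s ∈ (u i : Filter α) := tendsto_nhds_iff.1 h
  have hne' : ∃ᶠ i in cofinite, ¬ (z : Filter α) ≤ u i := by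
    simpa only [coe_le_coe, eq_comm] using not_eventually.1 hne
  obtain ⟨φ, B, hφ, hB, hmem⟩ := exists_injective_pairwise_disjoint_mem hconv hne'
  obtain ⟨t, ht, hinf⟩ := exists_mem_infinite_disjoint z hB
  refine (hinf.image hφ.injOn).mono ?_ (tendsto_nhds_iff.1 h t ht)
  rintro _ ⟨k, hk, rfl⟩ htu
  exact (u (φ k)).neBot.not_disjoint htu (hmem k) hk

theorem finite_setOf_eq_of_forall_finite {x y : ι → Ultrafilter α} (hxy : ∀ i, x i ≠ y i)
    (H : ∀ s : Set α, {i | s ∈ x i ∧ s ∉ y i}.Finite) (z : Ultrafilter α) :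
    {i | x i = z}.Finite := by
  by_contra hQ
  have := Set.Infinite.to_subtype hQ
  have hconv : Tendsto (fun i : {i | x i = z} => y i) cofinite (𝓝 z) := by
    refine tendsto_nhds_iff.2 fun s hs => ((H s).preimage Subtype.val_injective.injOn).subset ?_
    intro i hi
    exact ⟨by rw [i.2]; exact hs, hi⟩
  obtain ⟨i, hi⟩ := (eventually_cofinite_eq_of_tendsto hconv).exists
  exact hxy i (i.2.trans hi.symm)

theorem exists_mem_notMem_of_ne {u v : Ultrafilter α} (h : u ≠ v) : ∃ s ∈ u, s ∉ v := by
  by_contra! H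
  exact h (coe_le_coe.1 fun s hs => H s hs).symm

theorem exists_infinite_mem_notMem {x y : ℕ → Ultrafilter α} (hxy : ∀ n, x n ≠ y n) :
    ∃ s : Set α, {n | s ∈ x n ∧ s ∉ y n}.Infinite := by
  by_contra! H
  have H' : ∀ s : Set α, {n | s ∈ y n ∧ s ∉ x n}.Finite := fun s => by
    simpa only [compl_mem_iff_notMem, and_comm, not_not] using H sᶜ
  set V := Ultrafilter.of (cofinite : Filter ℕ)
  have hV {s : Set ℕ} (hs : s.Finite) : ∀ᶠ n in V, n ∉ s := of_le _ hs.eventually_cofinite_notMem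
  set z := V.bind x
  have hconv (s : Set α) (hs : s ∈ z) : ∀ᶠ n in V, s ∈ (x n : Filter α) ⊔ y n :=
    ((show ∀ᶠ n in V, s ∈ x n from hs).and (hV (H s))).mono fun n ⟨hx, hnot⟩ =>
      ⟨hx, by simpa [hx] using hnot⟩
  have hne : ∃ᶠ n in V, ¬ (z : Filter α) ≤ (x n : Filter α) ⊔ y n :=
    ((hV (finite_setOf_eq_of_forall_finite hxy H z)).and
      (hV (finite_setOf_eq_of_forall_finite (fun n => (hxy n).symm) H' z))).frequently.mono
      fun n hn => by simpa [le_sup_iff, coe_le_coe, eq_comm] using hn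
  obtain ⟨φ, B, hφ, hB, hmem⟩ := exists_injective_pairwise_disjoint_mem hconv hne
  choose S hSx hSy using fun n => exists_mem_notMem_of_ne (hxy n)
  set A := ⋃ k, B k ∩ S (φ k)
  have hAB (k : ℕ) : A ∩ B k ⊆ S (φ k) := by
    rintro a ⟨ha, hak⟩
    obtain ⟨j, haj, haS⟩ := mem_iUnion.1 ha
    obtain rfl : j = k := by_contra fun hjk => disjoint_left.1 (hB hjk) haj hak
    exact haS
  refine (H A).not_infinite ((infinite_range_of_injective hφ).mono ?_)
  rintro _ ⟨k, rfl⟩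
  exact ⟨mem_of_superset (inter_mem (hmem k).1 (hSx _)) (subset_iUnion (fun j => B j ∩ S (φ j)) k),
    fun hA => hSy _ (mem_of_superset (inter_mem hA (hmem k).2) (hAB k))⟩

theorem isCountablyCompact_compl_diagonal : IsCountablyCompact (diagonal (Ultrafilter α))ᶜ := by
  refine IsCountablyCompact.of_seq_clusterPt fun p hp => ?_
  obtain ⟨N, hN⟩ := eventually_atTop.1 hp
  set q := fun n => p (n + N)
  obtain ⟨s, hs⟩ := exists_infinite_mem_notMem (x := fun n => (q n).1) (y := fun n => (q n).2)
    fun n => hN _ (Nat.le_add_left N n)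
  have := hs.cofinite_inf_principal_neBot
  set V := Ultrafilter.of (cofinite ⊓ 𝓟 {n | s ∈ (q n).1 ∧ s ∉ (q n).2})
  have hVs : ∀ᶠ n in V, s ∈ (q n).1 ∧ s ∉ (q n).2 :=
    le_principal_iff.1 ((of_le _).trans inf_le_right)
  have hV : Tendsto (· + N) V atTop :=
    (tendsto_add_atTop_nat N).comp ((of_le _).trans (inf_le_left.trans Nat.cofinite_eq_atTop.le))
  set X := V.bind fun n => (q n).1
  set Y := V.bind fun n => (q n).2
  have hsX : s ∈ X := hVs.mono fun _ h => h.1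
  have hsY : sᶜ ∈ Y := hVs.mono fun _ h => compl_mem_iff_notMem.2 h.2
  refine ⟨(X, Y), fun (hXY : X = Y) => compl_mem_iff_notMem.1 (hXY ▸ hsY) hsX, ?_⟩
  have hq : Tendsto q V (𝓝 (X, Y)) :=
    (tendsto_nhds_iff.2 fun _ h => h).prodMk_nhds (tendsto_nhds_iff.2 fun _ h => h)
  exact hq.mapClusterPt.of_comp hV

end Ultrafilter

section
variable {X Y : Type*} [TopologicalSpace X] [TopologicalSpace Y]

theorem Homeomorph.isCountablyCompact_compl_diagonal (e : X ≃ₜ Y)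
    (h : IsCountablyCompact (diagonal X)ᶜ) : IsCountablyCompact (diagonal Y)ᶜ := by
  convert h.image (e.prodCongr e).continuous
  rw [(e.prodCongr e).image_eq_preimage_symm]
  ext ⟨a, b⟩
  simp

theorem discreteTopology_of_isCountablyCompact_compl_diagonal [T2Space X]
    [FirstCountableTopology X] (hX : IsCountablyCompact (diagonal X)ᶜ) : DiscreteTopology X := by
  refine discreteTopology_iff_nhds_ne.2 fun z => not_neBot.1 fun hz => ?_
  have hle : map (fun x => (x, z)) (𝓝[≠] z) ≤ 𝓟 (diagonal X)ᶜ :=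
    tendsto_principal.2 (eventually_mem_nhdsWithin.mono fun x (hx : x ≠ z) => hx)
  obtain ⟨p, hp, hpc⟩ := hX hle
  have hlim : map (fun x => (x, z)) (𝓝[≠] z) ≤ 𝓝 (z, z) :=
    ((continuous_id.prodMk continuous_const).tendsto z).mono_left nhdsWithin_le_nhds
  exact hp (eq_of_nhds_neBot (hpc.neBot.mono (inf_le_inf_left _ hlim)) ▸ rfl)

theorem SepFun.firstCountableTopology [CompactSpace X] {F : Set C(X, ℝ)} (hF : SepFun F)
    (hfin : F.Finite) : FirstCountableTopology X := by
  have := hfin.to_subtype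
  have hinj : Injective fun x (f : F) => (f : C(X, ℝ)) x := fun x y hxy => by
    by_contra hne
    obtain ⟨f, hf, hfxy⟩ := hF x y hne
    exact hfxy (congrFun hxy ⟨f, hf⟩)
  have hcont : Continuous fun x (f : F) => (f : C(X, ℝ)) x :=
    continuous_pi fun f => (f : C(X, ℝ)).continuous
  exact (hcont.isClosedEmbedding hinj).isInducing.firstCountableTopology

theorem MinSepFun.finite (hX : IsCountablyCompact (diagonal X)ᶜ) {F : Set C(X, ℝ)}
    (hF : MinSepFun F) : F.Finite := by
  by_contra hinf
  set e := Set.Infinite.natEmbedding F hinf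
  have hpair (n : ℕ) : ∃ p : X × X, p.1 ≠ p.2 ∧ ∀ g ∈ F, g ≠ e n → g p.1 = g p.2 := by
    have := hF.2 _ (sdiff_singleton_ssubset.2 (e n).2)
    simp only [SepFun, not_forall, not_exists, not_and, not_not] at this
    obtain ⟨x, y, hxy, h⟩ := this
    exact ⟨(x, y), hxy, fun g hg hgn => h g ⟨hg, hgn⟩⟩
  choose p hp hsep using hpair
  obtain ⟨q, hq, hqp⟩ := hX.seq_clusterPt p (Eventually.of_forall hp)
  obtain ⟨f, hf, hfq⟩ := hF.1 q.1 q.2 hq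
  have hU : IsOpen {r : X × X | f r.1 ≠ f r.2} :=
    isOpen_ne_fun (f.continuous.comp continuous_fst) (f.continuous.comp continuous_snd)
  have hfreq : ∃ᶠ n in atTop, f = e n :=
    (hqp.frequently (hU.mem_nhds hfq)).mono fun n hn => by_contra fun hne => hn (hsep n f hf hne)
  have hsub : {n | f = e n}.Subsingleton := fun m hm n hn =>
    e.injective (Subtype.ext (hm.symm.trans hn))
  exact hfreq (Nat.cofinite_eq_atTop ▸ hsub.finite.eventually_cofinite_notMem)

end

noncomputable def ultrafilterHomeomorphStoneCech (α : Type*) [TopologicalSpace α]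
    [DiscreteTopology α] : Ultrafilter α ≃ₜ StoneCech α where
  toFun := Ultrafilter.extend stoneCechUnit
  invFun := stoneCechExtend (continuous_of_discreteTopology (f := pure))
  left_inv := congrFun <| denseRange_pure.equalizer
    ((continuous_stoneCechExtend _).comp (continuous_ultrafilter_extend _)) continuous_id <| by
      ext a; simp [ultrafilter_extend_pure, stoneCechExtend_stoneCechUnit]
  right_inv := congrFun <| stoneCech_hom_ext
    ((continuous_ultrafilter_extend _).comp (continuous_stoneCechExtend _)) continuous_id <| by
      ext a; simp [ultrafilter_extend_pure, stoneCechExtend_stoneCechUnit]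
  continuous_toFun := continuous_ultrafilter_extend _
  continuous_invFun := continuous_stoneCechExtend _

/-- The Čech–Stone compactification `βω` of the countable discrete space `ω` has no
minimal point-separating set of continuous real-valued functions. -/
theorem stmt6 : ¬ ∃ F : Set C(StoneCech ℕ, ℝ), MinSepFun F := by
  rintro ⟨F, hF⟩
  let e := ultrafilterHomeomorphStoneCech ℕ
  have hX : IsCountablyCompact (diagonal (StoneCech ℕ))ᶜ :=
    e.isCountablyCompact_compl_diagonal Ultrafilter.isCountablyCompact_compl_diagonal
  have := hF.1.firstCountableTopology (hF.finite hX)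
  have := discreteTopology_of_isCountablyCompact_compl_diagonal hX
  have := Infinite.of_injective _ (e.injective.comp Ultrafilter.pure_injective)
  have := finite_of_compact_of_discrete (X := StoneCech ℕ)
  exact not_finite (StoneCech ℕ)
end

section
/- Let X be a normal Tychonoff space and suppose there is a closed subset S ⊆ X with at most one non-isolated point (in S) such that |S| = w(X), where w(X) is the weight of X. Then X has a minimal point-separating set of continuous real-valued functions. -/
/-- The weight of a topological space: the least cardinality of a base. -/
noncomputable def weight (X : Type*) [TopologicalSpace X] : Cardinal :=
  ⨅ B : {B : Set (Set X) // TopologicalSpace.IsTopologicalBasis B}, Cardinal.mk B.1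

/-!
Let `κ = |S| = w(X)`. If `κ` is finite, `X` is a finite discrete space and the indicators of
all points but one form a minimal separating family. Otherwise fix a base `B` of size `κ` and a
point `q ∈ S` such that every other point of `S` is isolated in `S`. The Urysohn functions of the
pairs `U, V ∈ B` with `closure U ⊆ V \ S` are at most `κ` many, vanish on `S`, and separate
every point off `S` from every other point. Attach each of them to two points of `S \ {q}` and
add bumps at these points with disjoint supports meeting `S` only in the point itself; the
remaining points of `S \ {q}` get bare bumps. On `S` the function attached to `s` is nonzero
exactly at `s`, so the family separates `S`, and without it nothing separates `s` from `q`.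
A point `x ∉ S` and a point `y` are separated by the Urysohn function `k` with `k y = 0 < k x`
plus the one of its two bumps whose support misses `y`.
-/

open Set TopologicalSpace
open scoped Cardinal

universe u

namespace Cardinal

theorem nonempty_sum_prod_embedding {α β : Type u} [Infinite β] (h : #α ≤ #β) :
    Nonempty ((α × α) ⊕ (α × α) ↪ β) := by
  have hβ := aleph0_le_mk β
  rw [← le_def, mk_sum, mk_prod, lift_id, lift_id]
  calc #α * #α + #α * #α ≤ #β * #β + #β * #β := by gcongr
    _ = #β := by rw [mul_eq_self hβ, add_eq_self hβ]

end Cardinal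

theorem Set.Infinite.mk_sdiff_singleton {α : Type*} {S : Set α} (hS : S.Infinite) (a : α) :
    #↥(S \ {a}) = #S := by
  have : Infinite ↥(S \ {a}) := (hS.sdiff (finite_singleton a)).to_subtype
  by_cases ha : a ∈ S
  · rw [← Cardinal.mk_sdiff_add_mk (singleton_subset_iff.2 ha), Cardinal.mk_singleton,
      Cardinal.add_one_eq (Cardinal.aleph0_le_mk _)]
  · rw [sdiff_singleton_eq_self ha]

section

variable {X : Type*} [TopologicalSpace X]

theorem exists_isTopologicalBasis_mk_eq_weight (X : Type*) [TopologicalSpace X] :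
    ∃ B : Set (Set X), IsTopologicalBasis B ∧ #B = weight X := by
  have : Nonempty {B : Set (Set X) // IsTopologicalBasis B} := ⟨⟨_, isTopologicalBasis_opens⟩⟩
  obtain ⟨B, hB⟩ := ciInf_mem fun B : {B : Set (Set X) // IsTopologicalBasis B} => #B.1
  exact ⟨B.1, B.2, hB⟩

theorem TopologicalSpace.IsTopologicalBasis.finite_of_finite [T1Space X] {B : Set (Set X)}
    (hB : IsTopologicalBasis B) (hfin : B.Finite) : Finite X := by
  have : Finite B := hfin
  refine Finite.of_injective (fun x : X => {b : B | x ∈ (b : Set X)}) fun x y hxy => ?_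
  by_contra hne
  obtain ⟨b, hbB, hxb, hby⟩ :=
    hB.exists_subset_of_mem_open (mem_compl_singleton_iff.2 hne) isOpen_compl_singleton
  have hmem : x ∈ b ↔ y ∈ b := by simpa using Set.ext_iff.1 hxy ⟨b, hbB⟩
  exact hby (hmem.1 hxb) rfl

theorem exists_bump [CompletelyRegularSpace X] {U : Set X} {x : X} (hU : IsOpen U)
    (hx : x ∈ U) : ∃ φ : C(X, ℝ), φ x = 1 ∧ EqOn φ 0 Uᶜ ∧ 0 ≤ φ := by
  obtain ⟨f, hf, hfx, hfU⟩ := CompletelyRegularSpace.completely_regular_isOpen x U hU hx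
  refine ⟨⟨fun y => 1 - f y, by fun_prop⟩, by simp [hfx], fun y hy => by simp [hfU hy], ?_⟩
  intro y
  simpa using (f y).2.2

theorem exists_urysohn_family [T1Space X] [NormalSpace X] {B : Set (Set X)}
    (hB : IsTopologicalBasis B) {S : Set X} (hS : IsClosed S) :
    ∃ k : B × B → C(X, ℝ), (∀ ρ, EqOn (k ρ) 0 S ∧ 0 ≤ k ρ) ∧
      ∀ x ∉ S, ∀ y, x ≠ y → ∃ ρ, k ρ y = 0 ∧ 0 < k ρ x := by
  have : ∀ ρ : B × B, ∃ f : C(X, ℝ), EqOn f 0 ((ρ.2 : Set X) ∩ Sᶜ)ᶜ ∧ 0 ≤ f ∧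
      (closure (ρ.1 : Set X) ⊆ ρ.2 ∩ Sᶜ → EqOn f 1 (closure ρ.1)) := by
    intro ρ
    by_cases h : closure (ρ.1 : Set X) ⊆ ρ.2 ∩ Sᶜ
    · obtain ⟨f, hf0, hf1, hf01⟩ := exists_continuous_zero_one_of_isClosed
        ((hB.isOpen ρ.2.2).inter hS.isOpen_compl).isClosed_compl isClosed_closure
        (disjoint_compl_left.mono_right h)
      exact ⟨f, hf0, fun y => (hf01 y).1, fun _ => hf1⟩
    · exact ⟨0, fun _ _ => rfl, le_rfl, fun h' => (h h').elim⟩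
  choose k hk0 hk_nonneg hk1 using this
  refine ⟨k, fun ρ => ⟨fun z hz => hk0 ρ fun h => h.2 hz, hk_nonneg ρ⟩, ?_⟩
  intro x hx y hxy
  obtain ⟨V, hVB, hxV, hVy⟩ :=
    hB.exists_subset_of_mem_open (mem_compl_singleton_iff.2 hxy) isOpen_compl_singleton
  obtain ⟨U, hUB, hxU, hUV⟩ :=
    hB.exists_closure_subset (((hB.isOpen hVB).inter hS.isOpen_compl).mem_nhds ⟨hxV, hx⟩)
  refine ⟨(⟨U, hUB⟩, ⟨V, hVB⟩), hk0 _ fun h => hVy h.1 rfl, ?_⟩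
  rw [hk1 _ hUV (subset_closure hxU)]
  exact one_pos

theorem exists_disjoint_nhds_of_embedding_sum [T2Space X] {T : Set X} {ι : Type*}
    (e : ι ⊕ ι ↪ T) :
    ∃ W : T → Set X, (∀ s, IsOpen (W s) ∧ ↑s ∈ W s) ∧
      ∀ i, Disjoint (W (e (.inl i))) (W (e (.inr i))) := by
  have hne : ∀ i, (e (.inl i) : X) ≠ e (.inr i) := fun i h =>
    Sum.inl_ne_inr (e.injective (Subtype.ext h))
  choose W₀ W₁ hW₀ hW₁ hxW₀ hxW₁ hW using fun i => t2_separation (hne i)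
  refine ⟨Function.extend e (Sum.elim W₀ W₁) fun _ => univ, fun s => ?_, fun i => ?_⟩
  · by_cases hs : ∃ w, e w = s
    · obtain ⟨w | w, rfl⟩ := hs <;> simp [e.injective.extend_apply, *]
    · simp [Function.extend_apply' _ _ _ hs]
  · simpa [e.injective.extend_apply] using hW i

theorem minSepFun_range_of_peaks {S : Set X} {q : X} (hq : q ∈ S) (G : ↥(S \ {q}) → C(X, ℝ))
    (hself : ∀ s : ↥(S \ {q}), G s s ≠ 0)
    (hzero : ∀ s : ↥(S \ {q}), ∀ t ∈ S, t ≠ s → G s t = 0)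
    (hsep : ∀ x ∉ S, ∀ y, x ≠ y → ∃ s, G s x ≠ G s y) : MinSepFun (range G) := by
  have hpeak : ∀ x ∈ S, ∀ y ∈ S, x ≠ y → x ≠ q → ∃ f ∈ range G, f x ≠ f y :=
    fun x hx y hy hxy hxq => ⟨G ⟨x, hx, hxq⟩, mem_range_self _, by
      rw [hzero _ y hy (Ne.symm hxy)]; exact hself _⟩
  refine ⟨fun x y hxy => ?_, fun H hH hHsep => ?_⟩
  · by_cases hx : x ∈ S
    · by_cases hy : y ∈ S
      · by_cases hxq : x = q
        · obtain ⟨f, hf, hfxy⟩ := hpeak y hy x hx (Ne.symm hxy) (hxq ▸ Ne.symm hxy)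
          exact ⟨f, hf, Ne.symm hfxy⟩
        · exact hpeak x hx y hy hxy hxq
      · obtain ⟨s, hs⟩ := hsep y hy x (Ne.symm hxy)
        exact ⟨G s, mem_range_self s, Ne.symm hs⟩
    · obtain ⟨s, hs⟩ := hsep x hx y hxy
      exact ⟨G s, mem_range_self s, hs⟩
  -- a removed `G s` was the only function that could separate `s` from `q`
  obtain ⟨_, ⟨s, rfl⟩, hsH⟩ := exists_of_ssubset hH
  obtain ⟨_, hfH, hf⟩ := hHsep s q s.2.2
  obtain ⟨t, rfl⟩ := hH.subset hfH
  have hts : (s : X) ≠ t := fun h => hsH (Subtype.ext h ▸ hfH)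
  exact hf ((hzero t s s.2.1 hts).trans (hzero t q hq (Ne.symm t.2.2)).symm)

theorem exists_minSepFun_of_discreteTopology [DiscreteTopology X] :
    ∃ F : Set C(X, ℝ), MinSepFun F := by
  rcases isEmpty_or_nonempty X with _ | ⟨⟨q⟩⟩
  · exact ⟨∅, fun x => isEmptyElim x, fun H hH _ => hH.ne (subset_empty_iff.1 hH.subset)⟩
  refine ⟨_, minSepFun_range_of_peaks (mem_univ q)
    (fun s : ↥(univ \ {q}) => ⟨indicator {(s : X)} 1, continuous_of_discreteTopology⟩)
    (fun s => ?_) (fun s t _ hts => ?_) (fun x hx => (hx (mem_univ x)).elim)⟩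
  · simp
  · simp [hts]

theorem exists_separating_peaks [T1Space X] [NormalSpace X] {S : Set X} {q : X}
    (hiso : ∀ s ∈ S, s ≠ q → ∃ U : Set X, IsOpen U ∧ U ∩ S = {s})
    {ι : Type*} (k : ι → C(X, ℝ)) (hk : ∀ i, EqOn (k i) 0 S ∧ 0 ≤ k i)
    (hksep : ∀ x ∉ S, ∀ y, x ≠ y → ∃ i, k i y = 0 ∧ 0 < k i x) (e : ι ⊕ ι ↪ ↥(S \ {q})) :
    ∃ G : ↥(S \ {q}) → C(X, ℝ), (∀ s : ↥(S \ {q}), G s s ≠ 0) ∧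
      (∀ s : ↥(S \ {q}), ∀ t ∈ S, t ≠ s → G s t = 0) ∧
      ∀ x ∉ S, ∀ y, x ≠ y → ∃ s, G s x ≠ G s y := by
  obtain ⟨W, hW, hWdisj⟩ := exists_disjoint_nhds_of_embedding_sum e
  choose O hO hOS using fun s : ↥(S \ {q}) => hiso s s.2.1 s.2.2
  have hsO : ∀ s : ↥(S \ {q}), (s : X) ∈ O s := fun s =>
    (show (s : X) ∈ O s ∩ S by rw [hOS]; rfl).1
  choose φ hφs hφ0 hφ_nonneg using fun s =>
    exists_bump ((hO s).inter (hW s).1) ⟨hsO s, (hW s).2⟩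
  -- `c` attaches `k i` to the two points `e (.inl i)`, `e (.inr i)` and `0` to all others
  set c := Function.extend e (Sum.elim k k) 0
  have hc : ∀ s, EqOn (c s) 0 S ∧ 0 ≤ c s := by
    intro s
    by_cases hs : ∃ w, e w = s
    · obtain ⟨w | w, rfl⟩ := hs <;> simpa [c, e.injective.extend_apply] using hk w
    · simp [c, Function.extend_apply' _ _ _ hs, EqOn]
  refine ⟨fun s => φ s + c s, fun s => ?_, fun s t ht hts => ?_, fun x hx y hxy => ?_⟩
  · simp [hφs, (hc s).1 s.2.1]
  · have : t ∉ O s ∩ W s := fun h =>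
      hts (by rw [← mem_singleton_iff, ← hOS]; exact ⟨h.1, ht⟩)
    simp [hφ0 s this, (hc s).1 ht]
  obtain ⟨i, hiy, hix⟩ := hksep x hx y hxy
  have hsep : ∀ w, Sum.elim k k w = k i → y ∉ W (e w) →
      ∃ s, φ s x + c s x ≠ φ s y + c s y := by
    intro w hw hyw
    have hcw : c (e w) = k i := (e.injective.extend_apply _ _ w).trans hw
    refine ⟨e w, ne_of_gt ?_⟩
    rw [hcw, hiy, hφ0 _ fun h => hyw h.2]
    simpa using add_pos_of_nonneg_of_pos (hφ_nonneg _ x) hix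
  by_cases hy : y ∈ W (e (.inl i))
  · exact hsep (.inr i) rfl (disjoint_left.1 (hWdisj i) hy)
  · exact hsep (.inl i) rfl hy

end

/-- A point `x ∈ S` is isolated in the subspace `S` iff some open set of `X` meets `S`
exactly in `x`. -/
theorem stmt8 {X : Type*} [TopologicalSpace X] [T35Space X] [NormalSpace X]
    (S : Set X) (hS : IsClosed S)
    (hiso : ∃ p : X, ∀ x ∈ S, x ≠ p → ∃ U : Set X, IsOpen U ∧ U ∩ S = {x})
    (hcard : Cardinal.mk S = weight X) :
    ∃ F : Set C(X, ℝ), MinSepFun F := by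
  obtain ⟨B, hB, hBS⟩ := exists_isTopologicalBasis_mk_eq_weight X
  rw [← hcard] at hBS
  rcases S.finite_or_infinite with hfin | hinf
  · have : Finite X :=
      hB.finite_of_finite (Cardinal.lt_aleph0_iff_set_finite.1 (hBS ▸ hfin.lt_aleph0))
    exact exists_minSepFun_of_discreteTopology
  obtain ⟨q, hqS, hq⟩ : ∃ q ∈ S, ∀ x ∈ S, x ≠ q → ∃ U : Set X, IsOpen U ∧ U ∩ S = {x} := by
    obtain ⟨p, hp⟩ := hiso
    by_cases hpS : p ∈ S
    · exact ⟨p, hpS, hp⟩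
    · obtain ⟨q, hqS⟩ := hinf.nonempty
      exact ⟨q, hqS, fun x hx _ => hp x hx (ne_of_mem_of_not_mem hx hpS)⟩
  have : Infinite ↥(S \ {q}) := (hinf.sdiff (finite_singleton q)).to_subtype
  obtain ⟨e⟩ :=
    Cardinal.nonempty_sum_prod_embedding (hBS.trans (hinf.mk_sdiff_singleton q).symm).le
  obtain ⟨k, hk, hksep⟩ := exists_urysohn_family hB hS
  obtain ⟨G, hself, hzero, hsep⟩ := exists_separating_peaks hq k hk hksep e
  exact ⟨_, minSepFun_range_of_peaks hqS G hself hzero hsep⟩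
end

section
/- For every infinite Tychonoff space X, the Alexandroff double of X has a minimal point-separating set of continuous real-valued functions of cardinality |X|. -/
/-- The Alexandroff double of `X`: underlying set `X × Bool`, where `(x, true)` plays
the role of the copy `x'` of `x`. -/
def AlexandroffDouble (X : Type*) : Type _ := X × Bool

/-- Topology of the Alexandroff double: each copy `(x, true)` is isolated, and the
basic neighborhoods of `(x, false)` are of the form `(U × Bool) \ {(x, true)}` for `U`
an open neighborhood of `x` in `X`. -/
instance AlexandroffDouble.topologicalSpace (X : Type*) [TopologicalSpace X] :
    TopologicalSpace (AlexandroffDouble X) :=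
  TopologicalSpace.generateFrom
    ({S : Set (X × Bool) | ∃ x : X, S = {(x, true)}} ∪
     {S : Set (X × Bool) | ∃ (U : Set X) (x : X), IsOpen U ∧ x ∈ U ∧
        S = (U ×ˢ (Set.univ : Set Bool)) \ {(x, true)}})

/-!
Since `|X × X| = |X|`, the pairs of distinct points of `X` can be indexed by `X` itself. For the
index `z` of a pair `(p, q)`, take a continuous function on `X` moving `p` and `q` more than `1`
apart, lift it to the double along the projection, and add the indicator of the isolated point
`z'`. The indicator moves values by at most `1`, so the pair stays separated, while `z` and `z'`
are separated by the function indexed by `z` alone: every other member is constant on `{z, z'}`.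
Hence the family is separating and minimal, and it is injectively indexed by `X`.
-/

open Set

section Separation

variable {Y : Type*} [TopologicalSpace Y]

theorem minSepFun_of_forall_sole_separator {F : Set C(Y, ℝ)} (hF : SepFun F)
    (hsole : ∀ f ∈ F, ∃ x y, x ≠ y ∧ ∀ g ∈ F, g x ≠ g y → g = f) : MinSepFun F := by
  refine ⟨hF, fun G hGF hG => ?_⟩
  obtain ⟨f, hfF, hfG⟩ := exists_of_ssubset hGF
  obtain ⟨x, y, hxy, hf⟩ := hsole f hfF
  obtain ⟨g, hgG, hgxy⟩ := hG x y hxy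
  exact hfG (hf g (hGF.subset hgG) hgxy ▸ hgG)

theorem exists_one_lt_abs_sub [T35Space Y] {p q : Y} (hpq : p ≠ q) :
    ∃ g : C(Y, ℝ), 1 < |g p - g q| := by
  obtain ⟨f, hf, hfp, hfq⟩ :=
    CompletelyRegularSpace.completely_regular p {q} isClosed_singleton hpq
  refine ⟨⟨fun y => 2 * (f y : ℝ), by fun_prop⟩, ?_⟩
  simp [hfp, hfq rfl]

end Separation

theorem exists_indexed_family_separating_pairs (X : Type*) [TopologicalSpace X] [T35Space X]
    [Infinite X] : ∃ c : X → C(X, ℝ), ∀ p q, p ≠ q → ∃ z, 1 < |c z p - c z q| := by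
  obtain ⟨e⟩ : Nonempty (X ≃ X × X) := Cardinal.eq.1 <| by
    simp [Cardinal.mul_eq_self (Cardinal.aleph0_le_mk X)]
  have (pq : X × X) : ∃ g : C(X, ℝ), pq.1 ≠ pq.2 → 1 < |g pq.1 - g pq.2| := by
    by_cases h : pq.1 = pq.2
    · exact ⟨0, absurd h⟩
    · obtain ⟨g, hg⟩ := exists_one_lt_abs_sub h
      exact ⟨g, fun _ => hg⟩
  choose g hg using this
  exact ⟨fun z => g (e z), fun p q hpq => ⟨e.symm (p, q), by simpa using hg (p, q) hpq⟩⟩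

namespace AlexandroffDouble

variable {X : Type*}

def base (x : X) : AlexandroffDouble X := (x, false)

def copy (x : X) : AlexandroffDouble X := (x, true)

theorem base_ne_copy (x y : X) : base x ≠ copy y := by
  intro h
  cases h

theorem copy_injective : Function.Injective (copy : X → AlexandroffDouble X) :=
  fun _ _ h => (Prod.mk.inj h).1

variable [TopologicalSpace X]

theorem isOpen_singleton_copy (x : X) : IsOpen {copy x} :=
  TopologicalSpace.isOpen_generateFrom_of_mem (Or.inl ⟨x, rfl⟩)

theorem isOpen_prod_univ_diff_copy {U : Set X} (hU : IsOpen U) {x : X} (hx : x ∈ U) :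
    IsOpen ((U ×ˢ univ) \ {copy x} : Set (AlexandroffDouble X)) :=
  TopologicalSpace.isOpen_generateFrom_of_mem (Or.inr ⟨U, x, hU, hx, rfl⟩)

theorem isClopen_singleton_copy (x : X) : IsClopen {copy x} := by
  refine ⟨isOpen_compl_iff.1 ?_, isOpen_singleton_copy x⟩
  have := isOpen_prod_univ_diff_copy (X := X) isOpen_univ (mem_univ x)
  rw [univ_prod_univ] at this
  convert this using 1
  exact compl_eq_univ_sdiff _

def fst : C(AlexandroffDouble X, X) where
  toFun := Prod.fst
  continuous_toFun := by
    refine continuous_def.2 fun U hU => ?_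
    rcases U.eq_empty_or_nonempty with rfl | ⟨x, hx⟩
    · exact isOpen_empty
    -- one point of the copy of `U` is enough to complete a basic open set to `U × Bool`
    have : (Prod.fst ⁻¹' U : Set (AlexandroffDouble X)) =
        ((U ×ˢ univ) \ {copy x}) ∪ {copy x} := by
      have hsub : {copy x} ⊆ (U ×ˢ univ : Set (AlexandroffDouble X)) :=
        singleton_subset_iff.2 (mk_mem_prod hx (mem_univ _))
      rw [sdiff_union_of_subset hsub, prod_univ]
      rfl
    exact this ▸ (isOpen_prod_univ_diff_copy hU hx).union (isOpen_singleton_copy x)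

@[simp]
theorem fst_base (x : X) : fst (base x) = x :=
  rfl

@[simp]
theorem fst_copy (x : X) : fst (copy x) = x :=
  rfl

noncomputable def indicatorCopy (x : X) : C(AlexandroffDouble X, ℝ) where
  toFun := indicator {copy x} 1
  continuous_toFun := continuous_one.indicator (by simp [(isClopen_singleton_copy x).frontier_eq])

noncomputable def markedLift (g : C(X, ℝ)) (z : X) : C(AlexandroffDouble X, ℝ) :=
  g.comp fst + indicatorCopy z

theorem markedLift_apply (g : C(X, ℝ)) (z : X) (p : AlexandroffDouble X) :
    markedLift g z p = g (fst p) + indicator {copy z} 1 p :=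
  rfl

theorem markedLift_copy_eq (g : C(X, ℝ)) {z x : X} (h : z ≠ x) :
    markedLift g z (copy x) = markedLift g z (base x) := by
  simp [markedLift_apply, base_ne_copy, copy_injective.ne h.symm]

theorem markedLift_copy_ne_self (g : C(X, ℝ)) (z : X) :
    markedLift g z (copy z) ≠ markedLift g z (base z) := by
  simp [markedLift_apply, base_ne_copy]

theorem markedLift_ne_of_one_lt_abs_sub (g : C(X, ℝ)) (z : X) {p q : AlexandroffDouble X}
    (h : 1 < |g (fst p) - g (fst q)|) : markedLift g z p ≠ markedLift g z q := by
  have hind (r : AlexandroffDouble X) :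
      indicator {copy z} (1 : AlexandroffDouble X → ℝ) r ∈ Icc 0 1 := by
    unfold indicator
    split_ifs <;> norm_num
  obtain ⟨hp₀, hp₁⟩ := hind p
  obtain ⟨hq₀, hq₁⟩ := hind q
  rw [markedLift_apply, markedLift_apply]
  rcases lt_abs.1 h with h | h <;> intro <;> linarith

theorem markedLift_fst_ne_of_fst_eq (g : C(X, ℝ)) {p q : AlexandroffDouble X} (h : fst p = fst q)
    (hpq : p ≠ q) : markedLift g (fst p) p ≠ markedLift g (fst p) q := by
  obtain ⟨x, _ | _⟩ := p <;> obtain ⟨y, _ | _⟩ := q <;> obtain rfl : x = y := h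
  exacts [absurd rfl hpq, (markedLift_copy_ne_self g x).symm, markedLift_copy_ne_self g x,
    absurd rfl hpq]

section IndexedFamily

variable (c : X → C(X, ℝ))

theorem injective_markedLift_self : Function.Injective fun z => markedLift (c z) z := by
  intro x y hxy
  by_contra hne
  apply markedLift_copy_ne_self (c x) x
  simp only at hxy
  rw [hxy]
  exact markedLift_copy_eq (c y) (Ne.symm hne)

theorem sepFun_range_markedLift_self (hc : ∀ p q, p ≠ q → ∃ z, 1 < |c z p - c z q|) :
    SepFun (range fun z => markedLift (c z) z) := by
  intro p q hpq
  by_cases h : fst p = fst q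
  · exact ⟨_, mem_range_self (fst p), markedLift_fst_ne_of_fst_eq _ h hpq⟩
  · obtain ⟨z, hz⟩ := hc _ _ h
    exact ⟨_, mem_range_self z, markedLift_ne_of_one_lt_abs_sub _ _ hz⟩

/-- The only member of the family separating `z` from its copy `z'` is the one marked at `z`. -/
theorem minSepFun_range_markedLift_self (hc : ∀ p q, p ≠ q → ∃ z, 1 < |c z p - c z q|) :
    MinSepFun (range fun z => markedLift (c z) z) := by
  refine minSepFun_of_forall_sole_separator (sepFun_range_markedLift_self c hc) ?_
  rintro _ ⟨z, rfl⟩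
  refine ⟨copy z, base z, (base_ne_copy z z).symm, ?_⟩
  rintro _ ⟨w, rfl⟩ hw
  by_contra hne
  exact hw (markedLift_copy_eq (c w) fun h => hne (h ▸ rfl))

end IndexedFamily

end AlexandroffDouble

/-- The Alexandroff double of any infinite Tychonoff space `X` has a minimal
point-separating set of continuous real-valued functions of cardinality `|X|`. -/
theorem stmt10 (X : Type*) [TopologicalSpace X] [T35Space X] [Infinite X] :
    ∃ F : Set C(AlexandroffDouble X, ℝ), MinSepFun F ∧ Cardinal.mk F = Cardinal.mk X := by
  obtain ⟨c, hc⟩ := exists_indexed_family_separating_pairs X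
  exact ⟨_, AlexandroffDouble.minSepFun_range_markedLift_self c hc,
    Cardinal.mk_range_eq _ (AlexandroffDouble.injective_markedLift_self c)⟩
end

section
/- For every infinite Tychonoff space X, the topological sum X ⊕ D of X with a discrete space D of cardinality |X| has a minimal point-separating set of continuous real-valued functions of cardinality |X|. -/
universe u

/-! A separating family in which every member is the unique separator of some pair of points is
minimal. Let `s : I → C(X, ℝ)` separate the points of `X` (with `I = X × X`), fix `x₀ : X` and
identify `D` with `Option (I × Bool)`. Take the indicator of `D` together with, for each `i`, the
extension of `s i` that equals `s i x₀` on `D` except at `(i, true)` and `(i, false)`, where it is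
raised by `1` and `2`. The indicator is the only member separating `x₀` from `none`, and the
extension of `s i` the only one separating `(i, true)` from `(i, false)`. -/

open Set Cardinal

section UniqueSeparators

variable {Y ι : Type*} [TopologicalSpace Y] {g : ι → C(Y, ℝ)}

theorem injective_of_unique_separators
    (huniq : ∀ o, ∃ a b : Y, ∀ o', g o' a ≠ g o' b ↔ o' = o) : Function.Injective g := by
  intro o o' h
  obtain ⟨a, b, hab⟩ := huniq o
  exact ((hab o').1 (h ▸ (hab o).2 rfl)).symm

theorem minSepFun_range_of_unique_separators (hsep : SepFun (range g))
    (huniq : ∀ o, ∃ a b : Y, ∀ o', g o' a ≠ g o' b ↔ o' = o) : MinSepFun (range g) := by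
  refine ⟨hsep, fun G hG hGsep => ?_⟩
  obtain ⟨_, ⟨o, rfl⟩, hoG⟩ := exists_of_ssubset hG
  obtain ⟨a, b, hab⟩ := huniq o
  obtain ⟨_, hfG, hf⟩ := hGsep a b fun h => (hab o).2 rfl (congrArg (g o) h)
  obtain ⟨o', rfl⟩ := hG.subset hfG
  exact hoG ((hab o').1 hf ▸ hfG)

end UniqueSeparators

theorem mk_option_prod_bool {α : Type*} [Infinite α] : #(Option (α × Bool)) = #α := by
  have hα := aleph0_le_mk α
  simp only [mk_option, mk_prod, lift_uzero, mk_fintype, Fintype.card_bool,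
    Nat.cast_ofNat, lift_ofNat]
  rw [mul_two, add_eq_self hα, add_one_eq hα]

theorem exists_sepFun_range_prod (X : Type*) [TopologicalSpace X] [T35Space X] :
    ∃ s : X × X → C(X, ℝ), SepFun (range s) := by
  have h : ∀ p : X × X, ∃ f : C(X, ℝ), p.1 ≠ p.2 → f p.1 ≠ f p.2 := fun p => by
    by_cases hp : p.1 = p.2
    · exact ⟨0, fun h => (h hp).elim⟩
    · obtain ⟨f, hf, hne⟩ := separatesPoints_continuous_of_t35Space hp
      exact ⟨⟨f, hf⟩, fun _ => hne⟩
  choose s hs using h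
  exact ⟨s, fun x y hxy => ⟨s (x, y), mem_range_self _, hs (x, y) hxy⟩⟩

section SumSepFamily

variable {X D I : Type*} [TopologicalSpace X] [TopologicalSpace D] [DiscreteTopology D]

open Classical in
noncomputable def sumSepMark (i : I) : Option (I × Bool) → ℝ
  | some (j, b) => if j = i then cond b 1 2 else 0
  | none => 0

theorem exists_sumSepMark_ne {p q : Option (I × Bool)} (h : p ≠ q) :
    ∃ i, sumSepMark i p ≠ sumSepMark i q := by
  rcases p with _ | ⟨i, b⟩
  · obtain ⟨⟨i, c⟩, rfl⟩ := Option.ne_none_iff_exists.1 h.symm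
    exact ⟨i, by cases c <;> simp [sumSepMark]⟩
  · refine ⟨i, ?_⟩
    rcases q with _ | ⟨j, c⟩
    · cases b <;> simp [sumSepMark]
    · by_cases hji : j = i
      · subst hji
        cases b <;> cases c <;> simp_all [sumSepMark]
      · cases b <;> simp [sumSepMark, hji]

noncomputable def sumSepFamily (s : I → C(X, ℝ)) (x₀ : X) (e : D ≃ Option (I × Bool)) :
    Option I → C(X ⊕ D, ℝ)
  | none => ⟨Sum.elim 0 1, continuous_const.sumElim continuous_const⟩
  | some i => ⟨Sum.elim (s i) fun d => s i x₀ + sumSepMark i (e d),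
      (s i).continuous.sumElim continuous_of_discreteTopology⟩

variable (s : I → C(X, ℝ)) (x₀ : X) (e : D ≃ Option (I × Bool))

@[simp] theorem sumSepFamily_none_inl (x : X) : sumSepFamily s x₀ e none (.inl x) = 0 := rfl
@[simp] theorem sumSepFamily_none_inr (d : D) : sumSepFamily s x₀ e none (.inr d) = 1 := rfl
@[simp] theorem sumSepFamily_some_inl (i : I) (x : X) :
    sumSepFamily s x₀ e (some i) (.inl x) = s i x := rfl
@[simp] theorem sumSepFamily_some_inr (i : I) (d : D) :
    sumSepFamily s x₀ e (some i) (.inr d) = s i x₀ + sumSepMark i (e d) := rfl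

theorem sepFun_range_sumSepFamily (hs : SepFun (range s)) :
    SepFun (range (sumSepFamily s x₀ e)) := by
  rintro (x | d) (y | d') hne
  · obtain ⟨_, ⟨i, rfl⟩, hi⟩ := hs x y fun h => hne (congrArg _ h)
    exact ⟨_, mem_range_self (some i), by simpa using hi⟩
  · exact ⟨_, mem_range_self none, by simp⟩
  · exact ⟨_, mem_range_self none, by simp⟩
  · obtain ⟨i, hi⟩ := exists_sumSepMark_ne (e.injective.ne fun h => hne (congrArg _ h))
    exact ⟨_, mem_range_self (some i), by simpa using hi⟩

theorem exists_unique_separator_sumSepFamily (o : Option I) :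
    ∃ a b : X ⊕ D, ∀ o', sumSepFamily s x₀ e o' a ≠ sumSepFamily s x₀ e o' b ↔ o' = o := by
  rcases o with _ | i
  · refine ⟨.inl x₀, .inr (e.symm none), fun o' => ?_⟩
    rcases o' with _ | j <;> simp [sumSepMark]
  · refine ⟨.inr (e.symm (some (i, true))), .inr (e.symm (some (i, false))), fun o' => ?_⟩
    rcases o' with _ | j
    · simp
    · by_cases hji : j = i
      · simp [sumSepMark, hji]
      · simp [sumSepMark, hji, Ne.symm hji]

end SumSepFamily

/-- For every infinite Tychonoff space `X`, the topological sum of `X` with a discrete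
space `D` of cardinality `|X|` has a minimal point-separating set of continuous
real-valued functions of cardinality `|X|`. -/
theorem stmt11 (X : Type u) [TopologicalSpace X] [T35Space X] [Infinite X]
    (D : Type u) [TopologicalSpace D] [DiscreteTopology D]
    (hD : Cardinal.mk D = Cardinal.mk X) :
    ∃ F : Set C(X ⊕ D, ℝ), MinSepFun F ∧ Cardinal.mk F = Cardinal.mk X := by
  have hX := aleph0_le_mk X
  have hXX : #(X × X) = #X := by rw [mk_prod, lift_id, mul_eq_self hX]
  obtain ⟨s, hs⟩ := exists_sepFun_range_prod X
  obtain ⟨x₀⟩ := (inferInstance : Nonempty X)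
  obtain ⟨e⟩ : Nonempty (D ≃ Option ((X × X) × Bool)) :=
    Cardinal.eq.1 (by rw [hD, mk_option_prod_bool, hXX])
  have huniq := exists_unique_separator_sumSepFamily s x₀ e
  refine ⟨range (sumSepFamily s x₀ e),
    minSepFun_range_of_unique_separators (sepFun_range_sumSepFamily s x₀ e hs) huniq, ?_⟩
  rw [mk_range_eq _ (injective_of_unique_separators huniq), mk_option, hXX, add_one_eq hX]
end

section
/- If each space X_α (α ∈ A) has a minimal point-separating set of continuous real-valued functions, then the product ∏_{α∈A} X_α has a minimal point-separating set of continuous real-valued functions; concretely, if F_α is minimal separating for X_α, then {f ∘ p_α : α ∈ A, f ∈ F_α} is minimal separating for the product, where p_α is the projection. -/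
/-! Two points of the product that differ in the single coordinate `α` can only be separated by
functions of the form `f ∘ p_α`. So if `G ⊆ {f ∘ p_β}` separates the product, the `f ∈ F α` with
`f ∘ p_α ∈ G` already separate `X α`, and minimality of `F α` forces all of them to lie in `G`. -/

open ContinuousMap

theorem MinSepFun.eq_of_subset {X : Type*} [TopologicalSpace X] {F G : Set C(X, ℝ)}
    (hF : MinSepFun F) (hGF : G ⊆ F) (hG : SepFun G) : G = F := by
  by_contra hne
  exact hF.2 G (hGF.ssubset_of_ne hne) hG

section Product

variable {A : Type*} {X : A → Type*} [∀ α, TopologicalSpace (X α)]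

theorem sepFun_iUnion_image_comp_eval {F : ∀ α, Set C(X α, ℝ)} (hF : ∀ α, SepFun (F α)) :
    SepFun (⋃ α, (fun f : C(X α, ℝ) => f.comp (eval α)) '' F α) := by
  intro x y hxy
  obtain ⟨α, hα⟩ := Function.ne_iff.1 hxy
  obtain ⟨f, hf, hfxy⟩ := hF α (x α) (y α) hα
  exact ⟨f.comp (eval α), Set.mem_iUnion.2 ⟨α, f, hf, rfl⟩, hfxy⟩

theorem SepFun.inter_comp_eval_mem [∀ α, Nonempty (X α)] {F : ∀ α, Set C(X α, ℝ)}
    {G : Set C(∀ α, X α, ℝ)} (hG : SepFun G)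
    (hGF : G ⊆ ⋃ β, (fun f : C(X β, ℝ) => f.comp (eval β)) '' F β) (α : A) :
    SepFun (F α ∩ {f | f.comp (eval α) ∈ G}) := by
  classical
  intro a b hab
  let x₀ : ∀ β, X β := fun β => Classical.arbitrary (X β)
  have hne : Function.update x₀ α a ≠ Function.update x₀ α b := by
    simpa using (Function.update_injective x₀ α).ne hab
  obtain ⟨g, hgG, hg⟩ := hG _ _ hne
  obtain ⟨β, f, hf, rfl⟩ := Set.mem_iUnion.1 (hGF hgG)
  obtain rfl : β = α := by
    by_contra hβ
    exact hg (by simp [Function.update_of_ne hβ])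
  exact ⟨f, ⟨hf, hgG⟩, by simpa using hg⟩

end Product

/-- If each (nonempty) space `X α` has a minimal point-separating set `F α` of
continuous real-valued functions, then `{f ∘ p_α : α ∈ A, f ∈ F α}` is a minimal
point-separating set for the product `∀ α, X α`, where `p_α` is the projection. -/
theorem stmt12 {A : Type*} {X : A → Type*} [∀ α, TopologicalSpace (X α)]
    [∀ α, Nonempty (X α)] (F : ∀ α, Set C(X α, ℝ)) (hF : ∀ α, MinSepFun (F α)) :
    MinSepFun (⋃ α, (fun f : C(X α, ℝ) =>
      f.comp ⟨fun x : (∀ β, X β) => x α, continuous_apply α⟩) '' F α) := by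
  refine ⟨sepFun_iUnion_image_comp_eval fun α => (hF α).1, ?_⟩
  rintro G ⟨hGF, hFG⟩ hG
  refine hFG ?_
  rintro _ ⟨_, ⟨α, rfl⟩, f, hf, rfl⟩
  have hGα := (hF α).eq_of_subset Set.inter_subset_left (hG.inter_comp_eval_mem hGF α)
  exact (hGα ▸ hf : f ∈ F α ∩ _).2
end
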